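/- Let n ≥ 2 be an integer and s ∈ (0,1). Let u₁, u₂ : (0,∞) → ℝ be continuous and each pointwise s-harmonic: for every r > 0 and i = 1,2, the function τ ↦ [u_i(r) − u_i(rτ) + (u_i(r) − u_i(r/τ)) τ^{2s−n}] · τ (τ²−1)^{−1−2s} H(τ) is Lebesgue integrable on (1,∞) with integral 0. If u₁(r) ≥ u₂(r) for all r > 0 and u₁(r̄) = u₂(r̄) for some r̄ > 0, then u₁ ≡ u₂ on (0,∞). -/

import Mathlib

/-!
Put `w = u₁ - u₂ ≥ 0`. By linearity `w` is again radially `s`-harmonic, and at the touching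
point `w(r̄) = 0` its integrand reduces to `-(w(r̄τ) + w(r̄/τ) τ^{2s-n}) · K(τ)` with a kernel
`K > 0` on `(1, ∞)`. A nonpositive function with vanishing integral is zero a.e., so
`w(r̄τ) = w(r̄/τ) = 0` for a.e. `τ > 1`, hence for all `τ > 1` by continuity; and
`{r̄τ, r̄/τ : τ > 1} ∪ {r̄}` is all of `(0, ∞)`.
-/

open MeasureTheory Set

/-- The kernel `H(τ)` from the radial representation of the fractional Laplacian. -/
noncomputable def Hker (n : ℕ) (s τ : ℝ) : ℝ :=
  2 * Real.pi * (Real.pi ^ (((n : ℝ) - 3) / 2) / Real.Gamma (((n : ℝ) - 1) / 2)) *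
    ∫ θ in (0:ℝ)..Real.pi,
      Real.sin θ ^ (n - 2) *
        ((Real.sqrt (τ ^ 2 - Real.sin θ ^ 2) + Real.cos θ) ^ (1 + 2 * s) /
          Real.sqrt (τ ^ 2 - Real.sin θ ^ 2))

lemma sin_sq_lt_sq_of_one_lt {τ : ℝ} (hτ : 1 < τ) (θ : ℝ) : Real.sin θ ^ 2 < τ ^ 2 := by
  nlinarith [Real.sin_sq_le_one θ]

lemma sqrt_sq_sub_sin_sq_add_cos_pos {τ : ℝ} (hτ : 1 < τ) (θ : ℝ) :
    0 < Real.sqrt (τ ^ 2 - Real.sin θ ^ 2) + Real.cos θ := by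
  have hlt : |Real.cos θ| < Real.sqrt (τ ^ 2 - Real.sin θ ^ 2) := by
    rw [← Real.sqrt_sq_eq_abs]
    exact Real.sqrt_lt_sqrt (sq_nonneg _) (by nlinarith [Real.sin_sq_add_cos_sq θ])
  linarith [neg_abs_le (Real.cos θ)]

lemma Hker_pos {n : ℕ} (hn : 2 ≤ n) (s : ℝ) {τ : ℝ} (hτ : 1 < τ) : 0 < Hker n s τ := by
  have hroot : ∀ θ, 0 < Real.sqrt (τ ^ 2 - Real.sin θ ^ 2) := fun θ =>
    Real.sqrt_pos.mpr (sub_pos.mpr (sin_sq_lt_sq_of_one_lt hτ θ))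
  have hbase := sqrt_sq_sub_sin_sq_add_cos_pos hτ
  have hcont : Continuous fun θ : ℝ => Real.sin θ ^ (n - 2) *
      ((Real.sqrt (τ ^ 2 - Real.sin θ ^ 2) + Real.cos θ) ^ (1 + 2 * s) /
        Real.sqrt (τ ^ 2 - Real.sin θ ^ 2)) := by
    refine (Real.continuous_sin.pow _).mul (Continuous.div ?_ (by fun_prop) fun θ => (hroot θ).ne')
    exact Continuous.rpow_const (by fun_prop) fun θ => Or.inl (hbase θ).ne'
  have hintegral := intervalIntegral.intervalIntegral_pos_of_pos_on (hcont.intervalIntegrable _ _)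
    (fun θ hθ => by
      have := Real.sin_pos_of_pos_of_lt_pi hθ.1 hθ.2
      have := Real.rpow_pos_of_pos (hbase θ) (1 + 2 * s)
      have := hroot θ
      positivity) Real.pi_pos
  have hGamma : 0 < Real.Gamma (((n : ℝ) - 1) / 2) := by
    apply Real.Gamma_pos_of_pos
    have : (2 : ℝ) ≤ n := by exact_mod_cast hn
    linarith
  have := Real.rpow_pos_of_pos Real.pi_pos (((n : ℝ) - 3) / 2)
  have := Real.pi_pos
  unfold Hker
  positivity

/-- In the theorem `p τ = τ ^ (2s - n)` and `K τ = τ (τ² - 1) ^ (-1 - 2s) H(τ)`. -/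
noncomputable def radialIntegrand (p K u : ℝ → ℝ) (r τ : ℝ) : ℝ :=
  (u r - u (r * τ) + (u r - u (r / τ)) * p τ) * K τ

lemma radialIntegrand_sub (p K u₁ u₂ : ℝ → ℝ) (r : ℝ) :
    radialIntegrand p K (u₁ - u₂) r = radialIntegrand p K u₁ r - radialIntegrand p K u₂ r := by
  funext τ
  simp only [radialIntegrand, Pi.sub_apply]
  ring

lemma ae_eq_zero_of_setIntegral_add_mul_eq_zero {α : Type*} [MeasurableSpace α] {μ : Measure α}
    {t : Set α} (ht : MeasurableSet t) {f g p K : α → ℝ}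
    (hf : ∀ x ∈ t, 0 ≤ f x) (hg : ∀ x ∈ t, 0 ≤ g x) (hp : ∀ x ∈ t, 0 < p x)
    (hK : ∀ x ∈ t, 0 < K x)
    (hint : IntegrableOn (fun x => (f x + g x * p x) * K x) t μ)
    (hzero : ∫ x in t, (f x + g x * p x) * K x ∂μ = 0) :
    ∀ᵐ x ∂μ.restrict t, f x = 0 ∧ g x = 0 := by
  have hgp : ∀ x ∈ t, 0 ≤ g x * p x := fun x hx => mul_nonneg (hg x hx) (hp x hx).le
  have hnonneg : ∀ x ∈ t, 0 ≤ f x + g x * p x := fun x hx => add_nonneg (hf x hx) (hgp x hx)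
  have hae := (setIntegral_eq_zero_iff_of_nonneg_ae
    ((ae_restrict_iff' ht).mpr (.of_forall fun x hx => mul_nonneg (hnonneg x hx) (hK x hx).le))
    hint).mp hzero
  filter_upwards [hae, ae_restrict_mem ht] with x hx hxt
  have hsum : f x + g x * p x = 0 := (mul_eq_zero.mp hx).resolve_right (hK x hxt).ne'
  obtain ⟨hfx, hgpx⟩ := (add_eq_zero_iff_of_nonneg (hf x hxt) (hgp x hxt)).mp hsum
  exact ⟨hfx, (mul_eq_zero.mp hgpx).resolve_right (hp x hxt).ne'⟩

lemma eqOn_Ioi_zero_of_mul_of_div {w : ℝ → ℝ} {rb : ℝ} (hrb : 0 < rb) (hwrb : w rb = 0)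
    (hmul : EqOn (fun τ => w (rb * τ)) 0 (Ioi 1)) (hdiv : EqOn (fun τ => w (rb / τ)) 0 (Ioi 1)) :
    EqOn w 0 (Ioi 0) := by
  intro r (hr : 0 < r)
  rcases lt_trichotomy r rb with h | rfl | h
  · simpa [div_div_cancel₀ hrb.ne', hr.ne'] using hdiv (show 1 < rb / r from (one_lt_div hr).mpr h)
  · exact hwrb
  · simpa [mul_div_cancel₀ r hrb.ne'] using hmul (show 1 < r / rb from (one_lt_div hrb).mpr h)

theorem eqOn_zero_of_radialIntegrand {p K w : ℝ → ℝ} {rb : ℝ} (hrb : 0 < rb)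
    (hp : ∀ τ > 1, 0 < p τ) (hK : ∀ τ > 1, 0 < K τ)
    (hw : ContinuousOn w (Ioi 0)) (hw0 : ∀ r > 0, 0 ≤ w r) (hwrb : w rb = 0)
    (hint : IntegrableOn (radialIntegrand p K w rb) (Ioi 1))
    (hzero : ∫ τ in Ioi 1, radialIntegrand p K w rb τ = 0) :
    EqOn w 0 (Ioi 0) := by
  have hneg : radialIntegrand p K w rb = fun τ => -((w (rb * τ) + w (rb / τ) * p τ) * K τ) := by
    funext τ
    simp only [radialIntegrand, hwrb]
    ring
  have hpos : ∀ τ ∈ Ioi (1 : ℝ), 0 < τ := fun τ (hτ : 1 < τ) => one_pos.trans hτ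
  have hmulpos : MapsTo (fun τ => rb * τ) (Ioi 1) (Ioi 0) := fun τ hτ =>
    mul_pos hrb (hpos τ hτ)
  have hdivpos : MapsTo (fun τ => rb / τ) (Ioi 1) (Ioi 0) := fun τ hτ =>
    div_pos hrb (hpos τ hτ)
  have hae := ae_eq_zero_of_setIntegral_add_mul_eq_zero measurableSet_Ioi
    (fun τ hτ => hw0 _ (hmulpos hτ)) (fun τ hτ => hw0 _ (hdivpos hτ)) hp hK
    (by simpa only [hneg, neg_neg] using hint.fun_neg)
    (by simpa only [hneg, integral_neg, neg_eq_zero] using hzero)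
  apply eqOn_Ioi_zero_of_mul_of_div hrb hwrb
  · refine Measure.eqOn_open_of_ae_eq (hae.mono fun τ h => h.1) isOpen_Ioi ?_ continuousOn_const
    exact hw.comp (by fun_prop) hmulpos
  · refine Measure.eqOn_open_of_ae_eq (hae.mono fun τ h => h.2) isOpen_Ioi ?_ continuousOn_const
    exact hw.comp (continuousOn_const.div continuousOn_id fun τ hτ => (hpos τ hτ).ne') hdivpos

theorem stmt_10_general (n : ℕ) (hn : 2 ≤ n) (s : ℝ)
    (u₁ u₂ : ℝ → ℝ)
    (hcont₁ : ContinuousOn u₁ (Set.Ioi 0)) (hcont₂ : ContinuousOn u₂ (Set.Ioi 0))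
    (hharm₁ : ∀ r > (0:ℝ),
      IntegrableOn
        (fun τ : ℝ =>
          (u₁ r - u₁ (r * τ) + (u₁ r - u₁ (r / τ)) * τ ^ (2 * s - (n : ℝ))) *
            (τ * (τ ^ 2 - 1) ^ (-1 - 2 * s) * Hker n s τ))
        (Set.Ioi 1) ∧
      (∫ τ in Set.Ioi (1:ℝ),
          (u₁ r - u₁ (r * τ) + (u₁ r - u₁ (r / τ)) * τ ^ (2 * s - (n : ℝ))) *
            (τ * (τ ^ 2 - 1) ^ (-1 - 2 * s) * Hker n s τ)) = 0)
    (hharm₂ : ∀ r > (0:ℝ),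
      IntegrableOn
        (fun τ : ℝ =>
          (u₂ r - u₂ (r * τ) + (u₂ r - u₂ (r / τ)) * τ ^ (2 * s - (n : ℝ))) *
            (τ * (τ ^ 2 - 1) ^ (-1 - 2 * s) * Hker n s τ))
        (Set.Ioi 1) ∧
      (∫ τ in Set.Ioi (1:ℝ),
          (u₂ r - u₂ (r * τ) + (u₂ r - u₂ (r / τ)) * τ ^ (2 * s - (n : ℝ))) *
            (τ * (τ ^ 2 - 1) ^ (-1 - 2 * s) * Hker n s τ)) = 0)
    (hge : ∀ r > (0:ℝ), u₂ r ≤ u₁ r)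
    (rb : ℝ) (hrb : 0 < rb) (htouch : u₁ rb = u₂ rb) :
    ∀ r > (0:ℝ), u₁ r = u₂ r := by
  set p : ℝ → ℝ := fun τ => τ ^ (2 * s - (n : ℝ))
  set K : ℝ → ℝ := fun τ => τ * (τ ^ 2 - 1) ^ (-1 - 2 * s) * Hker n s τ
  obtain ⟨hint₁, hzero₁⟩ := hharm₁ rb hrb
  obtain ⟨hint₂, hzero₂⟩ := hharm₂ rb hrb
  have hint : IntegrableOn (radialIntegrand p K (u₁ - u₂) rb) (Ioi 1) := by
    rw [radialIntegrand_sub]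
    exact hint₁.sub hint₂
  have hzero : ∫ τ in Ioi 1, radialIntegrand p K (u₁ - u₂) rb τ = 0 := by
    rw [radialIntegrand_sub]
    exact (integral_sub hint₁ hint₂).trans (by rw [hzero₁, hzero₂, sub_zero])
  have hK : ∀ τ > 1, 0 < K τ := fun τ hτ =>
    mul_pos (mul_pos (one_pos.trans hτ) (Real.rpow_pos_of_pos (by nlinarith) _)) (Hker_pos hn s hτ)
  have hp : ∀ τ > 1, 0 < p τ := fun τ hτ => Real.rpow_pos_of_pos (one_pos.trans hτ) _
  have hw := eqOn_zero_of_radialIntegrand hrb hp hK (hcont₁.sub hcont₂)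
    (fun r hr => sub_nonneg.mpr (hge r hr)) (sub_eq_zero.mpr htouch) hint hzero
  exact fun r hr => sub_eq_zero.mp (hw hr)

/-- Comparison (touching) principle for radial `s`-harmonic functions: if `u₁ ≥ u₂`, both
radially `s`-harmonic and continuous on `(0,∞)`, touch at one point, they coincide. -/
theorem stmt_10 (n : ℕ) (hn : 2 ≤ n) (s : ℝ) (hs : s ∈ Set.Ioo (0:ℝ) 1)
    (u₁ u₂ : ℝ → ℝ)
    (hcont₁ : ContinuousOn u₁ (Set.Ioi 0)) (hcont₂ : ContinuousOn u₂ (Set.Ioi 0))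
    (hharm₁ : ∀ r > (0:ℝ),
      IntegrableOn
        (fun τ : ℝ =>
          (u₁ r - u₁ (r * τ) + (u₁ r - u₁ (r / τ)) * τ ^ (2 * s - (n : ℝ))) *
            (τ * (τ ^ 2 - 1) ^ (-1 - 2 * s) * Hker n s τ))
        (Set.Ioi 1) ∧
      (∫ τ in Set.Ioi (1:ℝ),
          (u₁ r - u₁ (r * τ) + (u₁ r - u₁ (r / τ)) * τ ^ (2 * s - (n : ℝ))) *
            (τ * (τ ^ 2 - 1) ^ (-1 - 2 * s) * Hker n s τ)) = 0)
    (hharm₂ : ∀ r > (0:ℝ),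
      IntegrableOn
        (fun τ : ℝ =>
          (u₂ r - u₂ (r * τ) + (u₂ r - u₂ (r / τ)) * τ ^ (2 * s - (n : ℝ))) *
            (τ * (τ ^ 2 - 1) ^ (-1 - 2 * s) * Hker n s τ))
        (Set.Ioi 1) ∧
      (∫ τ in Set.Ioi (1:ℝ),
          (u₂ r - u₂ (r * τ) + (u₂ r - u₂ (r / τ)) * τ ^ (2 * s - (n : ℝ))) *
            (τ * (τ ^ 2 - 1) ^ (-1 - 2 * s) * Hker n s τ)) = 0)
    (hge : ∀ r > (0:ℝ), u₂ r ≤ u₁ r)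
    (rb : ℝ) (hrb : 0 < rb) (htouch : u₁ rb = u₂ rb) :
    ∀ r > (0:ℝ), u₁ r = u₂ r :=
  stmt_10_general n hn s u₁ u₂ hcont₁ hcont₂ hharm₁ hharm₂ hge rb hrb htouch
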